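/- arXiv:2311.08021 — 2 statements merged into one kernel-verified Lean document; each statement's English description precedes it below -/
import Mathlib

section
/- For d ≥ 1 and n sufficiently large with 2d < n, the product Q_d = ∏_{i=0}^{d-1} (n-3i)/(n-1-2i) satisfies Q_d ≤ n/(n-1) and Q_d ≥ 1 + d·log(1 - d/(n-2d)). -/
open Finset

/-!
Write `q_i = (n - 3i)/(n - 1 - 2i) = 1 - (i - 1)/(n - 1 - 2i)`. Then `q_0 = n/(n - 1)` and
`q_i ≤ 1` for `i ≥ 1`, which gives the upper bound. For `i < d` every `q_i` is at least
`x = 1 - d/(n - 2d)`, so `Q_d ≥ x^d = exp (d log x) ≥ 1 + d log x`.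
-/

noncomputable def qFactor (a : ℝ) (i : ℕ) : ℝ := (a - 3 * i) / (a - 1 - 2 * i)

noncomputable def Q (a : ℝ) (d : ℕ) : ℝ := ∏ i ∈ range d, qFactor a i

section

variable {a : ℝ} {d i : ℕ}

lemma qFactor_zero : qFactor a 0 = a / (a - 1) := by
  simp [qFactor]

lemma qFactor_nonneg (hi : i < d) (h : 3 * d ≤ a) : 0 ≤ qFactor a i := by
  have : (i : ℝ) + 1 ≤ d := by exact_mod_cast hi
  exact div_nonneg (by linarith) (by linarith)

lemma qFactor_le_one (hi : 1 ≤ i) (h : 2 * i + 1 < a) : qFactor a i ≤ 1 := by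
  have : (1 : ℝ) ≤ i := by exact_mod_cast hi
  exact (div_le_one (by linarith)).2 (by linarith)

lemma one_sub_div_le_qFactor (hi : i < d) (h : 2 * d < a) :
    1 - d / (a - 2 * d) ≤ qFactor a i := by
  have hid : (i : ℝ) + 1 ≤ d := by exact_mod_cast hi
  have hden : 0 < a - 1 - 2 * i := by linarith
  have hq : qFactor a i = 1 - (i - 1) / (a - 1 - 2 * i) := by
    rw [qFactor, eq_sub_iff_add_eq, ← add_div, div_eq_one_iff_eq hden.ne']
    ring
  have : (i - 1) / (a - 1 - 2 * i) ≤ d / (a - 2 * d) :=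
    div_le_div₀ (by linarith) (by linarith) (by linarith) (by linarith)
  linarith

lemma Q_le_div (ha : 1 < a) (h : 3 * d ≤ a) : Q a d ≤ a / (a - 1) := by
  cases d with
  | zero => simpa [Q] using (one_le_div (by linarith)).2 (by linarith)
  | succ d =>
    have htail : ∏ i ∈ range d, qFactor a (i + 1) ≤ 1 := by
      refine prod_le_one (fun i hi => qFactor_nonneg ?_ h)
        (fun i hi => qFactor_le_one le_add_self ?_)
      · simpa using mem_range.1 hi
      · have : (i : ℝ) + 1 ≤ d := by exact_mod_cast mem_range.1 hi
        push_cast at h ⊢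
        linarith
    rw [Q, prod_range_succ', qFactor_zero]
    exact mul_le_of_le_one_left (div_nonneg (by linarith) (by linarith)) htail

lemma one_add_mul_log_le_pow {x : ℝ} (hx : 0 < x) (d : ℕ) : 1 + d * Real.log x ≤ x ^ d := by
  have := Real.add_one_le_exp (d * Real.log x)
  rwa [Real.exp_nat_mul, Real.exp_log hx, add_comm] at this

lemma one_add_mul_log_le_Q (h : 3 * d < a) :
    1 + d * Real.log (1 - d / (a - 2 * d)) ≤ Q a d := by
  have hx : 0 < 1 - d / (a - 2 * d) := by
    rw [sub_pos, div_lt_one (by linarith)]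
    linarith
  calc 1 + d * Real.log (1 - d / (a - 2 * d)) ≤ (1 - d / (a - 2 * d)) ^ d :=
        one_add_mul_log_le_pow hx d
    _ = ∏ _i ∈ range d, (1 - d / (a - 2 * d)) := by rw [prod_const, card_range]
    _ ≤ Q a d := prod_le_prod (fun _ _ => hx.le)
        (fun i hi => one_sub_div_le_qFactor (mem_range.1 hi) (by linarith))

end

theorem Qd_bounds_general (d : ℕ) :
    ∃ N : ℕ, ∀ n : ℕ, N ≤ n → 2 * d < n →
      (∏ i ∈ Finset.range d, (((n : ℝ) - 3 * i) / ((n : ℝ) - 1 - 2 * i))) ≤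
          (n : ℝ) / ((n : ℝ) - 1) ∧
      1 + (d : ℝ) * Real.log (1 - (d : ℝ) / ((n : ℝ) - 2 * d)) ≤
        ∏ i ∈ Finset.range d, (((n : ℝ) - 3 * i) / ((n : ℝ) - 1 - 2 * i)) := by
  refine ⟨3 * d + 2, fun n hn _ => ?_⟩
  have hn : (3 * d + 2 : ℝ) ≤ n := by exact_mod_cast hn
  exact ⟨Q_le_div (by linarith) (by linarith), one_add_mul_log_le_Q (by linarith)⟩

/-- For `d ≥ 1` and `n` sufficiently large with `2d < n`, the product
`Q_d = ∏_{i=0}^{d-1} (n-3i)/(n-1-2i)` satisfies `Q_d ≤ n/(n-1)` and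
`Q_d ≥ 1 + d·log(1 - d/(n-2d))`. -/
theorem Qd_bounds (d : ℕ) (hd : 1 ≤ d) :
    ∃ N : ℕ, ∀ n : ℕ, N ≤ n → 2 * d < n →
      (∏ i ∈ Finset.range d, (((n : ℝ) - 3 * i) / ((n : ℝ) - 1 - 2 * i))) ≤
          (n : ℝ) / ((n : ℝ) - 1) ∧
      1 + (d : ℝ) * Real.log (1 - (d : ℝ) / ((n : ℝ) - 2 * d)) ≤
        ∏ i ∈ Finset.range d, (((n : ℝ) - 3 * i) / ((n : ℝ) - 1 - 2 * i)) :=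
  Qd_bounds_general d
end

section
/- Let G be a graph on n vertices whose b-edges partition the vertices into n/3 triangles and whose a-edges form a perfect matching, and suppose G contains k simple ab-cycles visiting triangle sets J₁,…,J_k which are pairwise distinct but may overlap. If t₂ triangles belong to exactly 2 of the cycles and t₃ triangles belong to exactly 3 of the cycles, then t₂ + t₃ is even. -/
/-!
Write `ρ = σ3 * σ2` (reading `ab`) and let `V i` be the entry vertices of the `i`-th cycle. Each
`V i` is a `ρ`-orbit, so distinct cycles have disjoint entry sets and `c y = #{i | y ∈ V i}` is a
`ρ`-invariant `0/1`-valued function. The number of cycles through a vertex is the sum of `c` over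
its triangle, so `∑ₓ C(mult x, 2)` equals both `3 t₂ + 9 t₃` and `3 ∑ₓ c x * c (σ3 x)`. As
`σ3 = ρ * σ2`, the last sum is `∑ₓ c x * c (σ2 x)`, whose terms pair up under the fixpoint-free
involution `σ2`. Hence `t₂ + 3 t₃` is even.
-/

/-- Given a fixpoint-free order-3 permutation `σ3` on the vertices (whose orbits
are the `b`-triangles) and a matching `σ2` (the `a`-edges), `SimpleCycleOn σ3 σ2 J`
says that the resulting graph contains a simple `ab`-cycle visiting exactly the
`b`-triangles forming the (`σ3`-closed) vertex set `J`: there is a choice `V` of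
exactly one vertex per triangle of `J` (the vertices reached after reading an
occurrence of `ab`), such that reading `ab` (i.e. applying `σ3 ∘ σ2`) permutes
`V` along a single cycle, and no `a`-edge used stays inside a `b`-triangle
(simplicity). -/
def SimpleCycleOn {n : ℕ} (σ3 σ2 : Equiv.Perm (Fin n)) (J : Finset (Fin n)) : Prop :=
  ∃ V : Finset (Fin n), V.Nonempty ∧ V ⊆ J ∧
    (∀ x ∈ J, ∃! y, y ∈ V ∧ (y = x ∨ y = σ3 x ∨ y = σ3 (σ3 x))) ∧
    (∀ v ∈ V, (σ3 * σ2) v ∈ V) ∧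
    (∀ v ∈ V, ∀ w ∈ V, ∃ m : ℕ, ((σ3 * σ2) ^ m) v = w) ∧
    (∀ v ∈ V, σ2 v ≠ σ3 v ∧ σ2 v ≠ σ3 (σ3 v))

open Finset

section Parity

variable {α : Type*} [Fintype α]

theorem even_sum_of_comp_involutive_eq {μ : α → α} (hμ : Function.Involutive μ)
    (hμfix : ∀ x, μ x ≠ x) (g : α → ℕ) (hg : ∀ x, g (μ x) = g x) : Even (∑ x, g x) := by
  rw [← ZMod.natCast_eq_zero_iff_even, Nat.cast_sum]
  refine sum_ninvolution μ (fun x => ?_) (fun x _ => hμfix x) (fun _ => mem_univ _) hμ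
  rw [hg]
  exact CharTwo.add_self_eq_zero _

theorem even_sum_mul_apply_of_mul_invariant {σ3 σ2 : Equiv.Perm α}
    (hσ2 : Function.Involutive σ2) (hσ2fix : ∀ x, σ2 x ≠ x)
    (c : α → ℕ) (hc : ∀ x, c ((σ3 * σ2) x) = c x) : Even (∑ x, c x * c (σ3 x)) := by
  have hσ3 : ∀ x, c (σ3 x) = c (σ2 x) := fun x => by
    simpa [hσ2 x] using hc (σ2 x)
  simp only [hσ3]
  exact even_sum_of_comp_involutive_eq hσ2 hσ2fix _ fun x => by rw [hσ2 x, mul_comm]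

end Parity

theorem Equiv.Perm.apply_apply_apply_of_pow_three {α : Type*} {σ : Equiv.Perm α}
    (hσ : σ ^ 3 = 1) (x : α) : σ (σ (σ x)) = x := by
  simpa [pow_succ] using congr($hσ x)

section Triangles

variable {α : Type*} [Fintype α] {σ : Equiv.Perm α}

theorem Nat.choose_two_add_add_of_le_one {a b c : ℕ} (ha : a ≤ 1) (hb : b ≤ 1) (hc : c ≤ 1) :
    (a + b + c).choose 2 = a * b + b * c + c * a := by
  interval_cases a <;> interval_cases b <;> interval_cases c <;> rfl

theorem sum_choose_two_add_add_of_pow_three (hσ : σ ^ 3 = 1) (f : α → ℕ) (hf : ∀ x, f x ≤ 1) :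
    ∑ x, (f x + f (σ x) + f (σ (σ x))).choose 2 = 3 * ∑ x, f x * f (σ x) := by
  have h₁ : ∑ x, f (σ x) * f (σ (σ x)) = ∑ x, f x * f (σ x) :=
    Equiv.sum_comp σ fun y => f y * f (σ y)
  have h₂ : ∑ x, f (σ (σ x)) * f x = ∑ x, f x * f (σ x) := by
    rw [← Equiv.sum_comp σ]
    simp only [σ.apply_apply_apply_of_pow_three hσ]
  simp only [Nat.choose_two_add_add_of_le_one (hf _) (hf _) (hf _), sum_add_distrib, h₁, h₂]
  ring

theorem Nat.choose_two_eq_of_le_three {m : ℕ} (hm : m ≤ 3) :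
    m.choose 2 = (if m = 2 then 1 else 0) + 3 * (if m = 3 then 1 else 0) := by
  interval_cases m <;> rfl

theorem sum_choose_two_eq_of_le_three (m : α → ℕ) (hm : ∀ x, m x ≤ 3) :
    ∑ x, (m x).choose 2 = #{x | m x = 2} + 3 * #{x | m x = 3} := by
  simp only [Nat.choose_two_eq_of_le_three (hm _), sum_add_distrib, ← mul_sum, card_filter]

end Triangles

section Transversals

variable {α : Type*} [DecidableEq α] {σ : Equiv.Perm α}

theorem ite_mem_eq_add_add_of_existsUnique (hσ : σ ^ 3 = 1) (hσfix : ∀ x, σ x ≠ x)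
    {J V : Finset α} (hJ : ∀ x ∈ J, σ x ∈ J) (hVJ : V ⊆ J)
    (huniq : ∀ x ∈ J, ∃! y, y ∈ V ∧ (y = x ∨ y = σ x ∨ y = σ (σ x))) (x : α) :
    (if x ∈ J then 1 else 0) =
      (if x ∈ V then 1 else 0) + (if σ x ∈ V then 1 else 0) + (if σ (σ x) ∈ V then 1 else 0) := by
  have h3 := σ.apply_apply_apply_of_pow_three hσ x
  have h₁ := hσfix x
  have h₂ := hσfix (σ x)
  have h₃ : σ (σ x) ≠ x := fun h => hσfix (σ (σ x)) (by rw [h3, h])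
  by_cases hx : x ∈ J
  · obtain ⟨y, ⟨hyV, hy⟩, hy_uniq⟩ := huniq x hx
    grind
  · have : σ x ∉ V := fun h => hx (h3 ▸ hJ _ (hJ _ (hVJ h)))
    have : σ (σ x) ∉ V := fun h => hx (h3 ▸ hJ _ (hVJ h))
    grind

end Transversals

section Orbits

variable {α : Type*} {ρ : Equiv.Perm α} {V : Finset α}

theorem Equiv.Perm.pow_apply_mem_of_forall_apply_mem (hρV : ∀ v ∈ V, ρ v ∈ V) (m : ℕ) :
    ∀ v ∈ V, (ρ ^ m) v ∈ V := by
  induction m with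
  | zero => simp
  | succ m ih => intro v hv; rw [pow_succ', Equiv.Perm.mul_apply]; exact hρV _ (ih v hv)

theorem Equiv.Perm.mem_iff_sameCycle_of_forall_exists_pow_eq [Finite α] (hρV : ∀ v ∈ V, ρ v ∈ V)
    (hconn : ∀ v ∈ V, ∀ w ∈ V, ∃ m : ℕ, (ρ ^ m) v = w) {v : α} (hv : v ∈ V) (w : α) :
    w ∈ V ↔ ρ.SameCycle v w := by
  refine ⟨fun hw => ?_, fun hvw => ?_⟩
  · obtain ⟨m, rfl⟩ := hconn v hv w hw
    exact ⟨m, by simp⟩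
  · obtain ⟨m, rfl⟩ := hvw.exists_nat_pow_eq
    exact ρ.pow_apply_mem_of_forall_apply_mem hρV m v hv

end Orbits

section SameCycleClasses

variable {α ι : Type*} [Fintype ι] [DecidableEq α] {ρ : Equiv.Perm α} {V : ι → Finset α}

theorem card_filter_apply_mem (hV : ∀ i, ∀ v ∈ V i, ∀ w, w ∈ V i ↔ ρ.SameCycle v w) (y : α) :
    #{i | ρ y ∈ V i} = #{i | y ∈ V i} := by
  congr 1; ext i
  simp only [mem_filter, mem_univ, true_and]
  constructor
  · intro h; exact (hV i _ h y).2 (Equiv.Perm.sameCycle_apply_left.2 .rfl)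
  · intro h; exact (hV i _ h _).2 (Equiv.Perm.sameCycle_apply_right.2 .rfl)

theorem card_filter_mem_le_one (hV : ∀ i, ∀ v ∈ V i, ∀ w, w ∈ V i ↔ ρ.SameCycle v w)
    (hinj : Function.Injective V) (y : α) : #{i | y ∈ V i} ≤ 1 := by
  refine card_le_one.2 fun i hi j hj => hinj ?_
  simp only [mem_filter, mem_univ, true_and] at hi hj
  ext w
  rw [hV i y hi, hV j y hj]

end SameCycleClasses

theorem SimpleCycleOn.exists_sameCycle_transversal {n : ℕ} {σ3 σ2 : Equiv.Perm (Fin n)}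
    {J : Finset (Fin n)} (h : SimpleCycleOn σ3 σ2 J) (hJ : ∀ x ∈ J, σ3 x ∈ J)
    (hσ3 : σ3 ^ 3 = 1) (hσ3fix : ∀ x, σ3 x ≠ x) :
    ∃ V : Finset (Fin n), (∀ v ∈ V, ∀ w, w ∈ V ↔ (σ3 * σ2).SameCycle v w) ∧
      ∀ x, (if x ∈ J then 1 else 0) = (if x ∈ V then 1 else 0) + (if σ3 x ∈ V then 1 else 0) +
        (if σ3 (σ3 x) ∈ V then 1 else 0) := by
  obtain ⟨V, -, hVJ, huniq, hVρ, hconn, -⟩ := h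
  exact ⟨V, fun v hv => Equiv.Perm.mem_iff_sameCycle_of_forall_exists_pow_eq hVρ hconn hv,
    ite_mem_eq_add_add_of_existsUnique hσ3 hσ3fix hJ hVJ huniq⟩

/-- Let `G` be a graph on `n` vertices whose `b`-edges partition the vertices
into triangles (orbits of the fixpoint-free order-3 permutation `σ3`) and whose
`a`-edges form a perfect matching (the fixpoint-free involution `σ2`), and
suppose `G` contains `k` simple `ab`-cycles visiting pairwise distinct (but
possibly overlapping) triangle sets `J₁,…,J_k`. If `t₂` triangles belong to
exactly 2 of the cycles and `t₃` triangles belong to exactly 3 of the cycles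
(so `3·t₂` resp. `3·t₃` vertices lie in exactly 2 resp. 3 of the `J_i`), then
`t₂ + t₃` is even. -/
theorem overlap_parity (n k : ℕ) (σ3 σ2 : Equiv.Perm (Fin n))
    (hσ3 : σ3 ^ 3 = 1) (hσ3f : ∀ x, σ3 x ≠ x)
    (hσ2 : σ2 ^ 2 = 1) (hσ2f : ∀ x, σ2 x ≠ x)
    (J : Fin k → Finset (Fin n)) (hJcl : ∀ i, ∀ x ∈ J i, σ3 x ∈ J i)
    (hJne : ∀ i j, i ≠ j → J i ≠ J j)
    (hcyc : ∀ i, SimpleCycleOn σ3 σ2 (J i))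
    (t₂ t₃ : ℕ)
    (ht₂ : 3 * t₂ =
      (Finset.univ.filter fun x : Fin n =>
        (Finset.univ.filter fun i : Fin k => x ∈ J i).card = 2).card)
    (ht₃ : 3 * t₃ =
      (Finset.univ.filter fun x : Fin n =>
        (Finset.univ.filter fun i : Fin k => x ∈ J i).card = 3).card) :
    Even (t₂ + t₃) := by
  choose V hV hJV using fun i => (hcyc i).exists_sameCycle_transversal (hJcl i) hσ3 hσ3f
  have hVinj : Function.Injective V := fun i j hij => by
    by_contra hne
    refine hJne i j hne (ext fun x => ?_)
    have hx := hJV i x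
    rw [hij, ← hJV j x] at hx
    split_ifs at hx <;> simp_all
  set c : Fin n → ℕ := fun y => #{i | y ∈ V i}
  have hmult : ∀ x, #{i | x ∈ J i} = c x + c (σ3 x) + c (σ3 (σ3 x)) := fun x => by
    simp only [c, card_filter, hJV, sum_add_distrib]
  have hc : ∀ y, c y ≤ 1 := card_filter_mem_le_one hV hVinj
  have hmult_le : ∀ x, #{i | x ∈ J i} ≤ 3 := fun x => by
    have := hc x; have := hc (σ3 x); have := hc (σ3 (σ3 x)); rw [hmult]; omega
  have hcount : 3 * t₂ + 3 * (3 * t₃) = 3 * ∑ x, c x * c (σ3 x) :=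
    calc 3 * t₂ + 3 * (3 * t₃) = ∑ x, (#{i | x ∈ J i}).choose 2 := by
          rw [ht₂, ht₃, sum_choose_two_eq_of_le_three _ hmult_le]
      _ = 3 * ∑ x, c x * c (σ3 x) := by
          simp only [hmult]; exact sum_choose_two_add_add_of_pow_three hσ3 c hc
  have hσ2inv : Function.Involutive σ2 := fun x => by simpa [sq] using congr($hσ2 x)
  obtain ⟨r, hr⟩ := even_sum_mul_apply_of_mul_invariant hσ2inv hσ2f c (card_filter_apply_mem hV)
  exact ⟨r - t₃, by omega⟩
end
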